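/- arXiv:2504.14447 — 4 statements merged into one kernel-verified Lean document; each statement's English description precedes it below -/
import Mathlib

section
/- Let f : ℕ → (0,1) be a decreasing function with f(x+1)/f(x) non-decreasing and f(2) > f(1)^2. Then for all x, a ∈ ℕ (x, a ≥ 1), f(x+a) > f(x) · f(a). -/
/-- If `f : ℕ → (0,1)` is decreasing, `x ↦ f(x+1)/f(x)` is non-decreasing, and
`f(2) > f(1)^2`, then `f(x+a) > f(x)·f(a)` for all `x, a ≥ 1`. -/
theorem stmt_1 (f : ℕ → ℝ)
    (hpos : ∀ x, 0 < f x) (hlt1 : ∀ x, f x < 1)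
    (hdec : ∀ x y, x ≤ y → f y ≤ f x)
    (hratio : ∀ x y, x ≤ y → f (x + 1) / f x ≤ f (y + 1) / f y)
    (hsup : f 1 ^ 2 < f 2) :
    ∀ x a, 1 ≤ x → 1 ≤ a → f x * f a < f (x + a) := by
  intro x a hx ha
  induction a, ha using Nat.le_induction with
  | base =>
    have h := hratio 1 x hx
    have h1 : f 1 < f 2 / f 1 := by
      rw [lt_div_iff₀ (hpos 1)]
      nlinarith [hsup]
    have h2 : f 1 < f (x + 1) / f x := lt_of_lt_of_le h1 h
    rw [lt_div_iff₀ (hpos x)] at h2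
    nlinarith
  | succ a ha ih =>
    have h := hratio a (x + a) (Nat.le_add_left a x)
    rw [div_le_div_iff₀ (hpos a) (hpos (x + a))] at h
    have hfa := hpos a
    have := hpos (a + 1)
    have hxa : f x * f a < f (x + a) := ih
    have : f x * f (a + 1) * f a < f (x + a + 1) * f a := by
      nlinarith [hpos x, hpos (x + a + 1)]
    have hfin : f x * f (a + 1) < f (x + a + 1) := by
      exact lt_of_mul_lt_mul_right this (le_of_lt hfa)
    simpa [Nat.add_assoc] using hfin
end

section
/- Let m*(s,t) = 1 + Σ_{k≥1} s^k ∫_0^t e^{−λy} y^{kα−1}/Γ(kα) dy. Then for s, r in a neighborhood of 0 with r > 0 and |s| < (r+λ)^α, the double transform satisfies ∫_0^∞ e^{−rt} m*(is,t) dt = (r+λ)^α / ( r((r+λ)^α − is) ). -/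
/-!
The `k`-th coefficient `t ↦ ∫₀ᵗ e^{-λy} y^{β-1} / Γ(β) dy` (with `β = (k+1)α`) is a primitive, so
by Fubini its Laplace transform at `r` is `1/r` times the Laplace transform of its integrand, a
Gamma integral equal to `(r+λ)^{-β}`. The `k`-th term therefore contributes `(is/q)^{k+1} / r`
with `q = (r+λ)^α`. The coefficients are nonnegative, so the integrated norms of the terms are
`(|s|/q)^{k+1} / r`, a convergent geometric series; this justifies integrating term by term, and
`1/r + Σ (is/q)^{k+1} / r = q / (r (q - is))`.
-/

open MeasureTheory Set Filter Real

section SeriesOfIntegrable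

variable {α E ι : Type*} [MeasurableSpace α] {μ : Measure α} [NormedAddCommGroup E]
  [Countable ι] {F : ι → α → E}

theorem lintegral_tsum_enorm_ne_top_of_summable_integral_norm
    (hF_int : ∀ i, Integrable (F i) μ) (hF_sum : Summable fun i ↦ ∫ a, ‖F i a‖ ∂μ) :
    ∫⁻ a, ∑' i, ‖F i a‖ₑ ∂μ ≠ ⊤ := by
  rw [lintegral_tsum fun i ↦ (hF_int i).1.enorm]
  simp_rw [← fun i ↦ ofReal_integral_norm_eq_lintegral_enorm (hF_int i)]
  rw [← ENNReal.ofReal_tsum_of_nonneg (fun i ↦ integral_nonneg fun _ ↦ norm_nonneg _) hF_sum]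
  exact ENNReal.ofReal_ne_top

theorem integrable_tsum_of_summable_integral_norm [CompleteSpace E]
    (hF_int : ∀ i, Integrable (F i) μ) (hF_sum : Summable fun i ↦ ∫ a, ‖F i a‖ ∂μ) :
    Integrable (fun a ↦ ∑' i, F i a) μ := by
  have hfin := lintegral_tsum_enorm_ne_top_of_summable_integral_norm hF_int hF_sum
  have hsum : ∀ᵐ a ∂μ, Summable fun i ↦ F i a := by
    filter_upwards [ae_lt_top' (AEMeasurable.tsum fun i ↦ (hF_int i).1.enorm) hfin]
      with a ha
    exact .of_norm (tsum_enorm_ne_top_iff_summable_norm.1 ha.ne)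
  refine ⟨aestronglyMeasurable_of_tendsto_ae atTop
    (fun s ↦ (integrable_finsetSum s fun i _ ↦ hF_int i).1) ?_, ?_⟩
  · filter_upwards [hsum] with a ha using ha.hasSum
  · rw [hasFiniteIntegral_iff_enorm]
    exact (lintegral_mono fun _ ↦ enorm_tsum_le_tsum_enorm).trans_lt hfin.lt_top

end SeriesOfIntegrable

section Laplace

variable {r : ℝ}

theorem integral_Ioi_indicator_Ici_exp_neg_mul (hr : 0 < r) {y : ℝ} (hy : 0 < y) :
    ∫ t in Ioi 0, (Ici y).indicator (fun t ↦ rexp (-r * t)) t = rexp (-r * y) / r := by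
  rw [setIntegral_indicator measurableSet_Ici,
    inter_eq_right.2 (Ici_subset_Ioi.2 hy), integral_Ici_eq_integral_Ioi,
    integral_exp_mul_Ioi (neg_neg_of_pos hr), div_neg, neg_div, neg_neg]

theorem indicator_snd_le_fst_mul_apply_eq_indicator_Ici (f g : ℝ → ℝ) (t y : ℝ) :
    {p : ℝ × ℝ | p.2 ≤ p.1}.indicator (fun p ↦ f p.1 * g p.2) (t, y)
      = (Ici y).indicator f t * g y := by
  by_cases h : y ≤ t <;> simp [indicator, h]

theorem indicator_snd_le_fst_mul_apply_eq_indicator_Iic (f g : ℝ → ℝ) (t y : ℝ) :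
    {p : ℝ × ℝ | p.2 ≤ p.1}.indicator (fun p ↦ f p.1 * g p.2) (t, y)
      = (Iic t).indicator g y * f t := by
  by_cases h : y ≤ t <;> simp [indicator, h, mul_comm]

theorem integrable_indicator_snd_le_fst_exp_neg_mul_mul {g : ℝ → ℝ} (hr : 0 < r)
    (hg : IntegrableOn (fun y ↦ rexp (-r * y) * g y) (Ioi 0)) :
    Integrable ({p : ℝ × ℝ | p.2 ≤ p.1}.indicator fun p ↦ rexp (-r * p.1) * g p.2)
      ((volume.restrict (Ioi 0)).prod (volume.restrict (Ioi 0))) := by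
  have hg_meas : AEStronglyMeasurable g (volume.restrict (Ioi 0)) := by
    refine ((continuous_exp.comp (continuous_const_mul r)).aestronglyMeasurable.mul hg.1).congr
      (ae_of_all _ fun y ↦ ?_)
    simp [← mul_assoc, ← exp_add]
  have hexp_int : IntegrableOn (fun t ↦ rexp (-r * t)) (Ioi 0) := exp_neg_integrableOn_Ioi 0 hr
  have hF_meas : AEStronglyMeasurable
      ({p : ℝ × ℝ | p.2 ≤ p.1}.indicator fun p ↦ rexp (-r * p.1) * g p.2)
      ((volume.restrict (Ioi 0)).prod (volume.restrict (Ioi 0))) :=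
    (((continuous_exp.comp (continuous_const_mul (-r))).comp
      continuous_fst).aestronglyMeasurable.mul hg_meas.comp_snd).indicator (measurableSet_le measurable_snd measurable_fst)
  refine (integrable_prod_iff' hF_meas).2 ⟨ae_of_all _ fun y ↦ ?_, ?_⟩
  · simp_rw [indicator_snd_le_fst_mul_apply_eq_indicator_Ici (fun t ↦ rexp (-r * t)) g]
    exact (hexp_int.indicator measurableSet_Ici).mul_const _
  · refine (hg.norm.div_const r).congr ((ae_restrict_iff' measurableSet_Ioi).2
      (ae_of_all _ fun y (hy : 0 < y) ↦ ?_))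
    simp_rw [indicator_snd_le_fst_mul_apply_eq_indicator_Ici (fun t ↦ rexp (-r * t)) g, norm_mul,
      norm_indicator_eq_indicator_norm, norm_of_nonneg (exp_pos _).le]
    rw [integral_mul_const, integral_Ioi_indicator_Ici_exp_neg_mul hr hy]
    ring

theorem integrableOn_and_integral_exp_neg_mul_mul_intervalIntegral {g : ℝ → ℝ} (hr : 0 < r)
    (hg : IntegrableOn (fun y ↦ rexp (-r * y) * g y) (Ioi 0)) :
    IntegrableOn (fun t ↦ rexp (-r * t) * ∫ y in 0..t, g y) (Ioi 0) ∧
      ∫ t in Ioi 0, rexp (-r * t) * ∫ y in 0..t, g y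
        = (∫ y in Ioi 0, rexp (-r * y) * g y) / r := by
  set μ := volume.restrict (Ioi (0 : ℝ))
  set F : ℝ × ℝ → ℝ := {p | p.2 ≤ p.1}.indicator fun p ↦ rexp (-r * p.1) * g p.2
  have hF_int : Integrable F (μ.prod μ) := integrable_indicator_snd_le_fst_exp_neg_mul_mul hr hg
  have hinner_y : ∀ t ∈ Ioi (0 : ℝ), ∫ y, F (t, y) ∂μ = rexp (-r * t) * ∫ y in 0..t, g y := by
    intro t (ht : 0 < t)
    simp_rw [F, indicator_snd_le_fst_mul_apply_eq_indicator_Iic (fun t ↦ rexp (-r * t)) g]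
    rw [integral_mul_const, integral_indicator measurableSet_Iic, Measure.restrict_restrict
      measurableSet_Iic, Iic_inter_Ioi, intervalIntegral.integral_of_le ht.le, mul_comm]
  have hinner_t : ∀ y ∈ Ioi (0 : ℝ), ∫ t, F (t, y) ∂μ = rexp (-r * y) * g y / r := by
    intro y (hy : 0 < y)
    simp_rw [F, indicator_snd_le_fst_mul_apply_eq_indicator_Ici (fun t ↦ rexp (-r * t)) g]
    rw [integral_mul_const, integral_Ioi_indicator_Ici_exp_neg_mul hr hy]
    ring
  constructor
  · exact hF_int.integral_prod_left.congr ((ae_restrict_iff' measurableSet_Ioi).2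
      (ae_of_all _ hinner_y))
  · calc ∫ t in Ioi 0, rexp (-r * t) * ∫ y in 0..t, g y
        = ∫ t, ∫ y, F (t, y) ∂μ ∂μ := (setIntegral_congr_fun measurableSet_Ioi hinner_y).symm
      _ = ∫ y, ∫ t, F (t, y) ∂μ ∂μ := integral_integral_swap hF_int
      _ = ∫ y in Ioi 0, rexp (-r * y) * g y / r :=
          setIntegral_congr_fun measurableSet_Ioi hinner_t
      _ = (∫ y in Ioi 0, rexp (-r * y) * g y) / r := integral_div r _

theorem integrableOn_and_integral_exp_neg_mul_mul_intervalIntegral_rpow_div_Gamma {lam β : ℝ}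
    (hr : 0 < r) (hrlam : 0 < r + lam) (hβ : 0 < β) :
    IntegrableOn (fun t ↦ rexp (-r * t) * ∫ y in 0..t, rexp (-lam * y) * y ^ (β - 1) / Gamma β)
        (Ioi 0) ∧
      ∫ t in Ioi 0, rexp (-r * t) * ∫ y in 0..t, rexp (-lam * y) * y ^ (β - 1) / Gamma β
        = ((r + lam) ^ β)⁻¹ / r := by
  have hterm : ∀ y, rexp (-r * y) * (rexp (-lam * y) * y ^ (β - 1) / Gamma β)
      = y ^ (β - 1) * rexp (-((r + lam) * y)) / Gamma β := by
    intro y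
    rw [show -((r + lam) * y) = -r * y + -lam * y by ring, exp_add]
    ring
  have hint : IntegrableOn (fun y ↦ y ^ (β - 1) * rexp (-((r + lam) * y)) / Gamma β) (Ioi 0) := by
    have h := integrableOn_rpow_mul_exp_neg_mul_rpow (p := 1) (by linarith : -1 < β - 1)
      one_pos hrlam
    simp only [rpow_one, neg_mul] at h
    exact h.div_const _
  simp_rw [← hterm] at hint
  obtain ⟨hL_int, hL_eq⟩ := integrableOn_and_integral_exp_neg_mul_mul_intervalIntegral hr hint
  refine ⟨hL_int, hL_eq.trans ?_⟩
  simp_rw [hterm]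
  rw [integral_div, integral_rpow_mul_exp_neg_mul_Ioi hβ hrlam,
    mul_div_cancel_right₀ _ (Gamma_pos_of_pos hβ).ne', one_div, inv_rpow hrlam.le]

theorem integrableOn_and_integral_cexp_neg_mul_mul_ofReal {φ : ℝ → ℝ} {L : ℝ}
    (hφ : ∀ t ∈ Ioi (0 : ℝ), 0 ≤ φ t) (hint : IntegrableOn (fun t ↦ rexp (-r * t) * φ t) (Ioi 0))
    (hL : ∫ t in Ioi 0, rexp (-r * t) * φ t = L) (z : ℂ) :
    IntegrableOn (fun t : ℝ ↦ Complex.exp (-(r : ℂ) * t) * (z * φ t)) (Ioi 0) ∧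
      ∫ t : ℝ in Ioi 0, Complex.exp (-(r : ℂ) * t) * (z * φ t) = z * L ∧
      ∫ t : ℝ in Ioi 0, ‖Complex.exp (-(r : ℂ) * t) * (z * φ t)‖ = ‖z‖ * L := by
  have heq : ∀ t : ℝ,
      Complex.exp (-(r : ℂ) * t) * (z * φ t) = z * ((rexp (-r * t) * φ t : ℝ) : ℂ) := by
    intro t
    push_cast
    ring
  simp_rw [heq]
  refine ⟨hint.ofReal.const_mul z, by rw [integral_const_mul, integral_complex_ofReal, hL], ?_⟩
  rw [← hL, ← integral_const_mul]
  refine setIntegral_congr_fun measurableSet_Ioi fun t ht ↦ ?_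
  rw [norm_mul, Complex.norm_real, norm_of_nonneg (mul_nonneg (exp_pos _).le (hφ t ht))]

theorem integrableOn_and_integral_cexp_neg_mul_mul_intervalIntegral_rpow_div_Gamma {lam β : ℝ}
    (hr : 0 < r) (hrlam : 0 < r + lam) (hβ : 0 < β) (z : ℂ) :
    IntegrableOn (fun t : ℝ ↦ Complex.exp (-(r : ℂ) * t) *
        (z * ((∫ y in (0 : ℝ)..t, rexp (-lam * y) * y ^ (β - 1) / Gamma β : ℝ) : ℂ))) (Ioi 0) ∧
      ∫ t : ℝ in Ioi 0, Complex.exp (-(r : ℂ) * t) *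
        (z * ((∫ y in (0 : ℝ)..t, rexp (-lam * y) * y ^ (β - 1) / Gamma β : ℝ) : ℂ))
        = z * (((r + lam) ^ β)⁻¹ / r : ℝ) ∧
      ∫ t : ℝ in Ioi 0, ‖Complex.exp (-(r : ℂ) * t) *
        (z * ((∫ y in (0 : ℝ)..t, rexp (-lam * y) * y ^ (β - 1) / Gamma β : ℝ) : ℂ))‖
        = ‖z‖ * (((r + lam) ^ β)⁻¹ / r) := by
  have hG : ∀ t ∈ Ioi (0 : ℝ), 0 ≤ ∫ y in (0 : ℝ)..t, rexp (-lam * y) * y ^ (β - 1) / Gamma β :=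
    fun t ht ↦ intervalIntegral.integral_nonneg (le_of_lt ht) fun y hy ↦
      div_nonneg (mul_nonneg (exp_pos _).le (rpow_nonneg hy.1 _)) (Gamma_pos_of_pos hβ).le
  obtain ⟨hL_int, hL_eq⟩ :=
    integrableOn_and_integral_exp_neg_mul_mul_intervalIntegral_rpow_div_Gamma hr hrlam hβ
  exact integrableOn_and_integral_cexp_neg_mul_mul_ofReal hG hL_int hL_eq z

end Laplace

theorem one_div_add_tsum_pow_succ_div {z : ℂ} (hz : ‖z‖ < 1) (w : ℂ) :
    1 / w + ∑' k : ℕ, z ^ (k + 1) / w = 1 / (w * (1 - z)) := by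
  have hz1 : 1 - z ≠ 0 := fun h ↦ by simp [sub_eq_zero.1 h |>.symm] at hz
  simp_rw [tsum_div_const, pow_succ', tsum_mul_left, tsum_geometric_of_norm_lt_one hz]
  field_simp
  ring

theorem stmt_7_general (lam α : ℝ) (hlam : 0 ≤ lam) (hα0 : 0 < α)
    (s r : ℝ) (hr : 0 < r) (hs : |s| < (r + lam) ^ α) :
    ∫ t in Set.Ioi (0 : ℝ),
        Complex.exp (-(r : ℂ) * t) *
          (1 + ∑' k : ℕ, (Complex.I * (s : ℂ)) ^ (k + 1) *
            ((∫ y in (0 : ℝ)..t,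
                Real.exp (-lam * y) * y ^ (((k : ℝ) + 1) * α - 1) /
                  Real.Gamma (((k : ℝ) + 1) * α) : ℝ) : ℂ))
      = (((r + lam) ^ α : ℝ) : ℂ) /
          ((r : ℂ) * ((((r + lam) ^ α : ℝ) : ℂ) - Complex.I * (s : ℂ))) := by
  have hrlam : 0 < r + lam := by linarith
  set q := (r + lam) ^ α
  have hq : 0 < q := rpow_pos_of_pos hrlam α
  set c : ℂ := Complex.I * s
  have hc : ‖c‖ = |s| := by simp [c]
  have hcq : ‖c / q‖ < 1 := by
    rwa [norm_div, hc, Complex.norm_real, norm_of_nonneg hq.le, div_lt_one hq]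
  have hpow : ∀ k : ℕ, (r + lam) ^ (((k : ℝ) + 1) * α) = q ^ (k + 1) := fun k ↦ by
    rw [mul_comm, rpow_mul hrlam.le, ← rpow_natCast]
    push_cast
    rfl
  have hterm := fun k : ℕ ↦
    integrableOn_and_integral_cexp_neg_mul_mul_intervalIntegral_rpow_div_Gamma
      (lam := lam) hr hrlam (by positivity : 0 < ((k : ℝ) + 1) * α) (c ^ (k + 1))
  simp_rw [hpow] at hterm
  simp_rw [mul_add, mul_one, ← tsum_mul_left]
  rw [integral_add (integrableOn_exp_mul_complex_Ioi (by simpa using hr) 0)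
      (integrable_tsum_of_summable_integral_norm (fun k ↦ (hterm k).1) ?_),
    ← integral_tsum_of_summable_integral_norm (fun k ↦ (hterm k).1) ?_,
    integral_exp_mul_complex_Ioi (by simpa using hr)]
  · have hseries : ∀ k : ℕ, c ^ (k + 1) * (((q ^ (k + 1))⁻¹ / r : ℝ) : ℂ) = (c / q) ^ (k + 1) / r :=
      fun k ↦ by push_cast; ring
    simp_rw [fun k ↦ (hterm k).2.1, hseries, Complex.ofReal_zero, mul_zero, Complex.exp_zero,
      neg_div_neg_eq]
    rw [one_div_add_tsum_pow_succ_div hcq, one_sub_div (Complex.ofReal_ne_zero.2 hq.ne'),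
      mul_div_assoc', one_div_div]
  -- both side goals are the summability of the norm integrals, a geometric series of ratio |s|/q
  all_goals
    simp_rw [fun k ↦ (hterm k).2.2, norm_pow, hc]
    refine ((summable_nat_add_iff 1).2 (summable_geometric_of_lt_one (by positivity)
      ((div_lt_one hq).2 hs))).div_const r |>.congr fun k ↦ ?_
    rw [div_pow]
    ring

/-- Double (Laplace–Fourier) transform of the EML* mgf:
`∫_0^∞ e^{−rt} m*(is,t) dt = (r+λ)^α / (r((r+λ)^α − is))`
for `r > 0` and `|s| < (r+λ)^α`. -/
theorem stmt_7 (lam α : ℝ) (hlam : 0 ≤ lam) (hα0 : 0 < α) (hα1 : α ≤ 1)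
    (s r : ℝ) (hr : 0 < r) (hs : |s| < (r + lam) ^ α) :
    ∫ t in Set.Ioi (0 : ℝ),
        Complex.exp (-(r : ℂ) * t) *
          (1 + ∑' k : ℕ, (Complex.I * (s : ℂ)) ^ (k + 1) *
            ((∫ y in (0 : ℝ)..t,
                Real.exp (-lam * y) * y ^ (((k : ℝ) + 1) * α - 1) /
                  Real.Gamma (((k : ℝ) + 1) * α) : ℝ) : ℂ))
      = (((r + lam) ^ α : ℝ) : ℂ) /
          ((r : ℂ) * ((((r + lam) ^ α : ℝ) : ℂ) - Complex.I * (s : ℂ))) :=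
  stmt_7_general lam α hlam hα0 s r hr hs
end

section
/- The function h(u) = (u+d)^{α+1} − 2u^{α+1} + (u−d)^{α+1} is nonnegative and decreasing in u on (d, ∞), for every d > 0 and α ∈ (0,1). -/
/-!
`h` is the second difference `g(u + d) - 2 g(u) + g(u - d)` of `g(x) = x^{α+1}`.
It is nonnegative because `g` is convex, and its derivative is the second difference of
`g' = (α + 1) x^α`, which is nonpositive because `g'` is concave.
-/

open Set Real

theorem ConvexOn.second_diff_nonneg {s : Set ℝ} {f : ℝ → ℝ} (hf : ConvexOn ℝ s f) {u d : ℝ}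
    (hsub : u - d ∈ s) (hadd : u + d ∈ s) :
    0 ≤ f (u + d) - 2 * f u + f (u - d) := by
  have h := hf.2 hsub hadd (by norm_num : (0 : ℝ) ≤ 1 / 2) (by norm_num : (0 : ℝ) ≤ 1 / 2)
    (by norm_num)
  have hmid : (1 / 2 : ℝ) • (u - d) + (1 / 2 : ℝ) • (u + d) = u := by
    simp only [smul_eq_mul]; ring
  rw [hmid, smul_eq_mul, smul_eq_mul] at h
  linarith

theorem ConcaveOn.second_diff_nonpos {s : Set ℝ} {f : ℝ → ℝ} (hf : ConcaveOn ℝ s f) {u d : ℝ}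
    (hsub : u - d ∈ s) (hadd : u + d ∈ s) :
    f (u + d) - 2 * f u + f (u - d) ≤ 0 := by
  have := hf.neg.second_diff_nonneg hsub hadd
  simp only [Pi.neg_apply] at this
  linarith

theorem antitoneOn_second_diff_of_concaveOn_deriv {g g' : ℝ → ℝ} {a d : ℝ} (hd : 0 ≤ d)
    (hg : ∀ x ∈ Ioi a, HasDerivAt g (g' x) x) (hg' : ConcaveOn ℝ (Ioi a) g') :
    AntitoneOn (fun u => g (u + d) - 2 * g u + g (u - d)) (Ioi (a + d)) := by
  have hderiv : ∀ u ∈ Ioi (a + d), HasDerivAt (fun u => g (u + d) - 2 * g u + g (u - d))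
      (g' (u + d) - 2 * g' u + g' (u - d)) u := by
    intro u hu
    rw [mem_Ioi] at hu
    have hadd := (hg (u + d) (by rw [mem_Ioi]; linarith)).comp_add_const u d
    have hmid := (hg u (by rw [mem_Ioi]; linarith)).const_mul 2
    have hsub := (hg (u - d) (by rw [mem_Ioi]; linarith)).comp_sub_const u d
    exact (hadd.sub hmid).add hsub
  refine antitoneOn_of_hasDerivWithinAt_nonpos (convex_Ioi _)
    (fun u hu => (hderiv u hu).continuousAt.continuousWithinAt)
    (fun u hu => (hderiv u (interior_subset hu)).hasDerivWithinAt) fun u hu => ?_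
  rw [interior_Ioi, mem_Ioi] at hu
  exact hg'.second_diff_nonpos (by rw [mem_Ioi]; linarith) (by rw [mem_Ioi]; linarith)

theorem concaveOn_const_mul_rpow {c p : ℝ} (hc : 0 ≤ c) (hp0 : 0 ≤ p) (hp1 : p ≤ 1) :
    ConcaveOn ℝ (Ioi 0) fun x : ℝ => c * x ^ p :=
  ((concaveOn_rpow hp0 hp1).smul hc).subset Ioi_subset_Ici_self (convex_Ioi 0)

/-- For `d > 0`, `α ∈ (0,1)`, the second difference
`h(u) = (u+d)^{α+1} − 2u^{α+1} + (u−d)^{α+1}` is nonnegative and decreasing on `(d, ∞)`. -/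
theorem stmt_17 (d α : ℝ) (hd : 0 < d) (hα0 : 0 < α) (hα1 : α < 1) :
    (∀ u ∈ Set.Ioi d,
        0 ≤ (u + d) ^ (α + 1) - 2 * u ^ (α + 1) + (u - d) ^ (α + 1)) ∧
    AntitoneOn (fun u : ℝ => (u + d) ^ (α + 1) - 2 * u ^ (α + 1) + (u - d) ^ (α + 1))
      (Set.Ioi d) := by
  refine ⟨fun u hu => ?_, ?_⟩
  · rw [mem_Ioi] at hu
    exact (convexOn_rpow (by linarith : (1 : ℝ) ≤ α + 1)).second_diff_nonneg
      (by rw [mem_Ici]; linarith) (by rw [mem_Ici]; linarith)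
  · have hg : ∀ x ∈ Ioi (0 : ℝ), HasDerivAt (fun x : ℝ => x ^ (α + 1)) ((α + 1) * x ^ α) x :=
      fun x _ => by
        simpa using hasDerivAt_rpow_const (x := x) (p := α + 1) (Or.inr (by linarith))
    simpa using antitoneOn_second_diff_of_concaveOn_deriv hd.le hg
      (concaveOn_const_mul_rpow (by linarith) hα0.le hα1.le)
end

section
/- For α ∈ (0,1), λ ≥ 0, ν > 0, S > 0, t > 0 and any positive integer p, the series Σ over (k₁,…,k_p) ∈ ℕ^p of (S t^α)^{(Σk_i − 1)} ν^{Σk_i − 1}/Γ(α(Σk_i − 1) + 1) converges, being bounded by (S t^α ν)^{−1} E_{α,1−α}^{p}(S t^α ν) < ∞, where E^γ_{α,β}(z) = (1/Γ(γ)) Σ_{k≥0} Γ(γ+k) z^k/(k! Γ(αk+β)) is the three-parameter Mittag-Leffler function. -/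
/-!
Put `z = S t^α ν` and `p = q + 1`. The summand depends only on `s = Σ kᵢ`, and by stars and
bars exactly `C(q + s, s)` tuples have `Σ kᵢ = s`, so the series is
`Σ_s C(q + s, s) z^(s+q) / Γ(α(s+q)+1)`. Since `Γ(p + n) / (n! Γ(p)) = C(q + n, n)` and
`α n + 1 - α = α (n - 1) + 1`, the `n = s + p` term of `z⁻¹ E^p_{α,1-α}(z)` is
`C(2q + s + 1, q) z^(s+q) / Γ(α(s+q)+1)`, which dominates the `s`-th term; dropping the positive
terms `n < p` makes the inequality strict. The Prabhakar series converges because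
`X^(x-2) ≤ Γ(x) e^X` for every `X ≥ 1`, so `1 / Γ(α n + β)` decays faster than any geometric
sequence.
-/

open Finset Real Filter

/-- The `k`-th term of `Γ(γ) E^γ_{α,β}(z)`. -/
noncomputable def prabhakarTerm (α β γ z : ℝ) (k : ℕ) : ℝ :=
  Gamma (γ + k) * z ^ k / (k.factorial * Gamma (α * k + β))

/-- The Prabhakar function `E^γ_{α,β}(z)`. -/
noncomputable def prabhakar (α β γ z : ℝ) : ℝ :=
  1 / Gamma γ * ∑' k, prabhakarTerm α β γ z k

theorem Real.rpow_sub_two_le_Gamma_mul_exp {X x : ℝ} (hX : 1 ≤ X) (hx : 2 ≤ x) :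
    X ^ (x - 2) ≤ Gamma x * exp X := by
  have h2 : 2 ≤ ⌊x⌋₊ := Nat.le_floor (by exact_mod_cast hx)
  obtain ⟨m, hm⟩ : ∃ m : ℕ, ⌊x⌋₊ = m + 1 := ⟨⌊x⌋₊ - 1, by omega⟩
  have hmx : (m + 1 : ℝ) ≤ x := by exact_mod_cast hm ▸ Nat.floor_le (by linarith)
  have hxm : x < m + 2 := by
    have := Nat.lt_floor_add_one x; rw [hm] at this; push_cast at this; linarith
  have hm2 : (2 : ℝ) ≤ m + 1 := by exact_mod_cast (by omega : 2 ≤ m + 1)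
  calc X ^ (x - 2) ≤ X ^ (m : ℝ) := rpow_le_rpow_of_exponent_le hX (by linarith)
    _ = X ^ m / m.factorial * m.factorial := by rw [rpow_natCast]; field_simp
    _ ≤ exp X * Gamma (m + 1) := by
        rw [Gamma_nat_eq_factorial]
        gcongr
        exact pow_div_factorial_le_exp X (by linarith) m
    _ ≤ exp X * Gamma x := by
        gcongr
        exact Gamma_strictMonoOn_Ici.monotoneOn hm2 (hm2.trans hmx) hmx
    _ = _ := mul_comm _ _

theorem Real.summable_pow_div_Gamma_mul_add {α : ℝ} (hα : 0 < α) (β c : ℝ) :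
    Summable fun n : ℕ => c ^ n / Gamma (α * n + β) := by
  obtain ⟨X, hcX, hX⟩ := ((tendsto_rpow_atTop hα).eventually_ge_atTop (2 * |c|)).and
    (eventually_ge_atTop 1) |>.exists
  have hX0 : 0 < X := by linarith
  have hlarge : ∀ᶠ n : ℕ in atTop, 2 ≤ α * n + β :=
    (tendsto_atTop_add_const_right _ β
      (tendsto_natCast_atTop_atTop.const_mul_atTop hα)).eventually_ge_atTop 2
  refine (summable_geometric_two.mul_left (exp X / X ^ (β - 2))).of_norm_bounded_eventually_nat ?_
  filter_upwards [hlarge] with n hn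
  have hΓ := rpow_sub_two_le_Gamma_mul_exp hX hn
  have hsplit : X ^ (α * n + β - 2) = (X ^ α) ^ n * X ^ (β - 2) := by
    rw [add_sub_assoc, rpow_add hX0, rpow_mul hX0.le, rpow_natCast]
  rw [norm_div, norm_pow, Real.norm_eq_abs, Real.norm_eq_abs,
    abs_of_pos (Gamma_pos_of_pos (by linarith)), div_le_iff₀ (Gamma_pos_of_pos (by linarith))]
  calc |c| ^ n ≤ (1 / 2) ^ n * (X ^ α) ^ n := by
        rw [← mul_pow]; gcongr; linarith
    _ = exp X / X ^ (β - 2) * (1 / 2) ^ n * (X ^ (α * n + β - 2) / exp X) := by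
        rw [hsplit]; field_simp
    _ ≤ exp X / X ^ (β - 2) * (1 / 2) ^ n * Gamma (α * n + β) := by
        gcongr; rwa [div_le_iff₀ (exp_pos X)]

theorem prabhakarTerm_pos {α β γ z : ℝ} (hα : 0 ≤ α) (hβ : 0 < β) (hγ : 0 < γ)
    (hz : 0 < z) (k : ℕ) : 0 < prabhakarTerm α β γ z k := by
  unfold prabhakarTerm
  positivity

theorem prabhakarTerm_natCast_succ (α β z : ℝ) (q k : ℕ) :
    prabhakarTerm α β (q + 1 : ℕ) z k =
      q.factorial * ((q + k).choose k * (z ^ k / Gamma (α * k + β))) := by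
  have hΓ : Gamma ((q + 1 : ℕ) + k) = (q + k).choose k * k.factorial * q.factorial := by
    rw [show ((q + 1 : ℕ) : ℝ) + k = (q + k : ℕ) + 1 by push_cast; ring,
      Gamma_nat_eq_factorial, ← Nat.add_choose_mul_factorial_mul_factorial q k]
    push_cast; ring
  rw [prabhakarTerm, hΓ]
  field_simp

theorem summable_prabhakarTerm_natCast_succ {α : ℝ} (hα : 0 < α) (β z : ℝ) (q : ℕ) :
    Summable (prabhakarTerm α β (q + 1 : ℕ) z) := by
  rw [funext (prabhakarTerm_natCast_succ α β z q)]
  refine .mul_left _ <| .of_norm_bounded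
    ((summable_pow_div_Gamma_mul_add hα β (2 * z)).norm.mul_left (2 ^ q)) fun k => ?_
  rw [norm_mul, Real.norm_natCast, norm_div, norm_div, norm_pow, norm_pow, norm_mul,
    Real.norm_ofNat, mul_pow]
  calc ((q + k).choose k : ℝ) * (‖z‖ ^ k / ‖Gamma (α * k + β)‖)
      ≤ 2 ^ (q + k) * (‖z‖ ^ k / ‖Gamma (α * k + β)‖) := by
        gcongr; exact_mod_cast Nat.choose_le_two_pow _ _
    _ = _ := by ring

theorem natCard_tuple_sum_eq_choose (p s : ℕ) :
    Nat.card {k : Fin p → ℕ // ∑ i, k i = s} = (p + s - 1).choose s := by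
  rw [← Nat.card_congr (Sym.equivNatSumOfFintype (Fin p) s), Nat.card_eq_fintype_card,
    Sym.card_sym_eq_choose, Fintype.card_fin]

theorem hasSum_comp_sum_of_nonneg {p : ℕ} {f : ℕ → ℝ} (hf : ∀ s, 0 ≤ f s)
    (h : Summable fun s => ((p + s - 1).choose s : ℝ) * f s) :
    HasSum (fun k : Fin p → ℕ => f (∑ i, k i))
      (∑' s, ((p + s - 1).choose s : ℝ) * f s) := by
  have hfin (s : ℕ) : Finite {k : Fin p → ℕ // ∑ i, k i = s} :=
    .of_equiv _ (Sym.equivNatSumOfFintype _ _)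
  have hfiber (s : ℕ) :
      ∑' k : {k : Fin p → ℕ // ∑ i, k i = s}, f (∑ i, k.1 i) =
        (p + s - 1).choose s * f s := by
    rw [tsum_congr fun k => congrArg f k.2, tsum_const, natCard_tuple_sum_eq_choose,
      nsmul_eq_mul]
  have hsigma :
      Summable fun x : Σ s, {k : Fin p → ℕ // ∑ i, k i = s} => f (∑ i, x.2.1 i) :=
    (summable_sigma_of_nonneg fun _ => hf _).2
      ⟨fun s => haveI := hfin s; .of_finite, by simpa only [hfiber] using h⟩
  rw [← (Equiv.sigmaFiberEquiv fun k : Fin p → ℕ => ∑ i, k i).hasSum_iff]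
  convert hsigma.hasSum using 1
  · rfl
  · rw [hsigma.tsum_sigma]
    exact tsum_congr fun s => (hfiber s).symm

theorem tsum_nat_add_succ_lt {f : ℕ → ℝ} (hf : Summable f) (h0 : ∀ n, 0 ≤ f n)
    (hpos : 0 < f 0) (q : ℕ) : ∑' n, f (n + (q + 1)) < ∑' n, f n := by
  rw [← hf.sum_add_tsum_nat_add (q + 1)]
  have := sum_pos' (fun i _ => h0 i) ⟨0, mem_range.2 q.succ_pos, hpos⟩
  linarith

theorem choose_mul_le_prabhakarTerm {α z : ℝ} (hα : 0 ≤ α) (hz : 0 < z) (q s : ℕ) :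
    ((q + s).choose s : ℝ) * (z ^ (s + q) / Gamma (α * (s + q : ℕ) + 1)) ≤
      z⁻¹ * (1 / Gamma (q + 1 : ℕ)) *
        prabhakarTerm α (1 - α) (q + 1 : ℕ) z (s + (q + 1)) := by
  have hchoose : (q + s).choose s ≤ (q + (s + (q + 1))).choose (s + (q + 1)) := by
    rw [← Nat.choose_symm_add, ← Nat.choose_symm_add]
    exact Nat.choose_le_choose q (by omega)
  rw [prabhakarTerm_natCast_succ, Nat.cast_succ, Gamma_nat_eq_factorial,
    show α * ((s + (q + 1) : ℕ) : ℝ) + (1 - α) = α * (s + q : ℕ) + 1 by push_cast; ring,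
    show s + (q + 1) = s + q + 1 by ring, pow_succ]
  calc ((q + s).choose s : ℝ) * (z ^ (s + q) / Gamma (α * (s + q : ℕ) + 1))
      ≤ (q + (s + q + 1)).choose (s + q + 1) *
          (z ^ (s + q) / Gamma (α * (s + q : ℕ) + 1)) := by
        gcongr; exact_mod_cast hchoose
    _ = _ := by field_simp

theorem stmt_19_general (α ν S t : ℝ) (hα0 : 0 < α) (hα1 : α < 1)
    (hν : 0 < ν) (hS : 0 < S) (ht : 0 < t) (p : ℕ) (hp : 1 ≤ p) :
    Summable (fun k : Fin p → ℕ =>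
      (S * t ^ α) ^ ((∑ i, (k i + 1)) - 1) * ν ^ ((∑ i, (k i + 1)) - 1) /
        Real.Gamma (α * ((((∑ i, (k i + 1)) - 1 : ℕ) : ℝ)) + 1)) ∧
    (∑' k : Fin p → ℕ,
        (S * t ^ α) ^ ((∑ i, (k i + 1)) - 1) * ν ^ ((∑ i, (k i + 1)) - 1) /
          Real.Gamma (α * ((((∑ i, (k i + 1)) - 1 : ℕ) : ℝ)) + 1))
      < (S * t ^ α * ν)⁻¹ *
          ((1 / Real.Gamma (p : ℝ)) *
            ∑' k : ℕ, Real.Gamma ((p : ℝ) + (k : ℝ)) * (S * t ^ α * ν) ^ k /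
              ((k.factorial : ℝ) * Real.Gamma (α * (k : ℝ) + (1 - α)))) := by
  obtain ⟨q, rfl⟩ := Nat.exists_eq_add_of_le' hp
  have hz : 0 < S * t ^ α * ν := by have := rpow_pos_of_pos ht α; positivity
  set z := S * t ^ α * ν
  set f : ℕ → ℝ := fun s => z ^ (s + q) / Gamma (α * (s + q : ℕ) + 1)
  have hterm (k : Fin (q + 1) → ℕ) :
      (S * t ^ α) ^ ((∑ i, (k i + 1)) - 1) * ν ^ ((∑ i, (k i + 1)) - 1) /
        Gamma (α * ((((∑ i, (k i + 1)) - 1 : ℕ) : ℝ)) + 1) = f (∑ i, k i) := by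
    rw [← mul_pow, sum_add_distrib, sum_const, card_univ, Fintype.card_fin, smul_eq_mul, mul_one,
      Nat.add_succ_sub_one]
  set c := z⁻¹ * (1 / Gamma (q + 1 : ℕ))
  set P := prabhakarTerm α (1 - α) (q + 1 : ℕ) z
  have hP : Summable P := summable_prabhakarTerm_natCast_succ hα0 (1 - α) z q
  have hPpos (k : ℕ) : 0 < P k := prabhakarTerm_pos hα0.le (by linarith) (by positivity) hz k
  have hPtail := ((summable_nat_add_iff (q + 1)).2 hP).mul_left c
  have hle := choose_mul_le_prabhakarTerm hα0.le hz q
  have hC : Summable fun s => ((q + s).choose s : ℝ) * f s :=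
    .of_nonneg_of_le (fun s => by positivity) hle hPtail
  have hidx (s : ℕ) : q + 1 + s - 1 = q + s := by omega
  have hsum := hasSum_comp_sum_of_nonneg (p := q + 1) (f := f) (fun s => by positivity)
    (by simpa only [hidx] using hC)
  simp only [hidx] at hsum
  simp only [hterm]
  refine ⟨hsum.summable, hsum.tsum_eq ▸ ?_⟩
  calc ∑' s, ((q + s).choose s : ℝ) * f s ≤ ∑' s, c * P (s + (q + 1)) :=
        hC.tsum_le_tsum hle hPtail
    _ = c * ∑' s, P (s + (q + 1)) := tsum_mul_left
    _ < c * ∑' k, P k := by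
        gcongr; exact tsum_nat_add_succ_lt hP (fun k => (hPpos k).le) (hPpos 0) q
    _ = z⁻¹ * prabhakar α (1 - α) (q + 1 : ℕ) z := mul_assoc _ _ _

/-- For `α ∈ (0,1)`, `λ ≥ 0`, `ν > 0`, `S > 0`, `t > 0` and `p ≥ 1`, the
multi-index series `Σ_{k∈ℕ₊^p} (St^α)^{Σk_i−1} ν^{Σk_i−1} / Γ(α(Σk_i−1)+1)`
converges and is bounded by `(St^α ν)⁻¹ E^p_{α,1−α}(St^α ν) < ∞`, where
`E^γ_{α,β}(z) = (1/Γ(γ)) Σ_{k≥0} Γ(γ+k) z^k/(k! Γ(αk+β))` is the Prabhakar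
(three-parameter Mittag-Leffler) function. -/
theorem stmt_19 (α lam ν S t : ℝ) (hα0 : 0 < α) (hα1 : α < 1) (hlam : 0 ≤ lam)
    (hν : 0 < ν) (hS : 0 < S) (ht : 0 < t) (p : ℕ) (hp : 1 ≤ p) :
    Summable (fun k : Fin p → ℕ =>
      (S * t ^ α) ^ ((∑ i, (k i + 1)) - 1) * ν ^ ((∑ i, (k i + 1)) - 1) /
        Real.Gamma (α * ((((∑ i, (k i + 1)) - 1 : ℕ) : ℝ)) + 1)) ∧
    (∑' k : Fin p → ℕ,
        (S * t ^ α) ^ ((∑ i, (k i + 1)) - 1) * ν ^ ((∑ i, (k i + 1)) - 1) /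
          Real.Gamma (α * ((((∑ i, (k i + 1)) - 1 : ℕ) : ℝ)) + 1))
      < (S * t ^ α * ν)⁻¹ *
          ((1 / Real.Gamma (p : ℝ)) *
            ∑' k : ℕ, Real.Gamma ((p : ℝ) + (k : ℝ)) * (S * t ^ α * ν) ^ k /
              ((k.factorial : ℝ) * Real.Gamma (α * (k : ℝ) + (1 - α)))) :=
  stmt_19_general α ν S t hα0 hα1 hν hS ht p hp
end
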